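/- arXiv:2604.12554 — 7 statements merged into one kernel-verified Lean document; each statement's English description precedes it below -/
import Mathlib

section
/- Let G be a finite group and ω a normalized 3-cocycle on G. In the twisted Heisenberg double H₁^ω(G) (with basis δ_a # g and product (δ_a # g)(δ_b # h) = δ_{b,ag} ω(a,g,h) (δ_a # gh)), define W̄ = Σ_{g∈G} (δ_g # 1) ⊗ (1 # g), where 1 denotes Σ_a δ_a in the first slot. Then the quasi-Hopf equation holds: W̄₂₃ W̄₁₃ W̄₁₂ = Φ̄' W̄₁₂ W̄₂₃, where Φ̄' = Σ_{a,b,c∈G} ω(c,b,a) (δ_a#1) ⊗ (δ_b#1) ⊗ (δ_c#1). -/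
open Finset

/-- Structure constants of the twisted Heisenberg double `H₁^ω(G)`:
`(δ_a # g)(δ_b # h) = [b = a*g] · ω(a,g,h) · (δ_a # gh)`.
A pair `(a, g)` encodes the basis element `δ_a # g`. -/
def mB {G : Type*} [Group G] [DecidableEq G] {k : Type*} [Field k]
    (ω : G → G → G → kˣ) (p q r : G × G) : k :=
  if q.1 = p.1 * p.2 ∧ r = (p.1, p.2 * q.2) then (ω p.1 p.2 q.2 : k) else 0

/-- The bilinear multiplication of `H₁^ω(G)` on the free module `G × G → k`. -/
def mulB {G : Type*} [Group G] [Fintype G] [DecidableEq G] {k : Type*} [Field k]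
    (ω : G → G → G → kˣ) (x y : G × G → k) : G × G → k :=
  fun r => ∑ p : G × G, ∑ q : G × G, x p * y q * mB ω p q r

/-- Componentwise multiplication on the tensor square of `H₁^ω(G)`. -/
def mulB2 {G : Type*} [Group G] [Fintype G] [DecidableEq G] {k : Type*} [Field k]
    (ω : G → G → G → kˣ) (x y : (G × G) × (G × G) → k) : (G × G) × (G × G) → k :=
  fun r => ∑ p : (G × G) × (G × G), ∑ q : (G × G) × (G × G),
    x p * y q * mB ω p.1 q.1 r.1 * mB ω p.2 q.2 r.2

/-- Componentwise multiplication on the tensor cube of `H₁^ω(G)`. -/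
def mulB3 {G : Type*} [Group G] [Fintype G] [DecidableEq G] {k : Type*} [Field k]
    (ω : G → G → G → kˣ) (x y : (G × G) × (G × G) × (G × G) → k) :
    (G × G) × (G × G) × (G × G) → k :=
  fun r => ∑ p : (G × G) × (G × G) × (G × G), ∑ q : (G × G) × (G × G) × (G × G),
    x p * y q * mB ω p.1 q.1 r.1 * mB ω p.2.1 q.2.1 r.2.1 * mB ω p.2.2 q.2.2 r.2.2

/-- The unit `Σ_a δ_a # 1_G` of `H₁^ω(G)`. -/
def unitB {G : Type*} [Group G] [DecidableEq G] (k : Type*) [Field k] :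
    G × G → k :=
  fun p => if p.2 = 1 then 1 else 0

/-- The canonical element `W̄ = Σ_g (δ_g # 1_G) ⊗ (Σ_a δ_a # g)` of `H₁^ω(G)⊗²`. -/
def WB {G : Type*} [Group G] [DecidableEq G] (k : Type*) [Field k] :
    (G × G) × (G × G) → k :=
  fun pq => if pq.1.2 = 1 ∧ pq.2.2 = pq.1.1 then 1 else 0


lemma mySumCollapse {α β : Type*} [Fintype α] [Fintype β] [DecidableEq α] [DecidableEq β]
    {k : Type*} [Field k] (f : α → β → k) (P : α) (Q : β) (c : k)
    (key : ∀ p q, f p q = if q = Q then if p = P then c else 0 else 0) :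
    (∑ p, ∑ q, f p q) = c := by
  simp [key]

set_option maxHeartbeats 1600000 in
/-- the quasi-Hopf equation `W̄₂₃ W̄₁₃ W̄₁₂ = Φ̄' W̄₁₂ W̄₂₃` in
`H₁^ω(G)^{⊗3}`, where `Φ̄' = Σ ω(c,b,a) (δ_a#1) ⊗ (δ_b#1) ⊗ (δ_c#1)`. -/
theorem stmt_5 {G : Type*} [Group G] [Fintype G] [DecidableEq G] {k : Type*} [Field k]
    (ω : G → G → G → kˣ)
    (hcoc : ∀ a b c d : G,
      ω a b c * ω a (b * c) d * ω b c d = ω (a * b) c d * ω a b (c * d))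
    (hnorm : ∀ a b c : G, a = 1 ∨ b = 1 ∨ c = 1 → ω a b c = 1) :
    mulB3 ω
      (mulB3 ω
        (fun pqr => unitB k pqr.1 * WB k (pqr.2.1, pqr.2.2))     -- W̄₂₃
        (fun pqr => WB k (pqr.1, pqr.2.2) * unitB k pqr.2.1))    -- W̄₁₃
      (fun pqr => WB k (pqr.1, pqr.2.1) * unitB k pqr.2.2)       -- W̄₁₂
    = mulB3 ω
        (mulB3 ω
          (fun pqr =>                                            -- Φ̄'
            if pqr.1.2 = 1 ∧ pqr.2.1.2 = 1 ∧ pqr.2.2.2 = 1 then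
              (ω pqr.2.2.1 pqr.2.1.1 pqr.1.1 : k)
            else 0)
          (fun pqr => WB k (pqr.1, pqr.2.1) * unitB k pqr.2.2))  -- W̄₁₂
        (fun pqr => unitB k pqr.1 * WB k (pqr.2.1, pqr.2.2)) := by  -- W̄₂₃
  have h1 : ∀ a b : G, (ω 1 a b : k) = 1 := fun a b => by rw [hnorm 1 a b (Or.inl rfl)]; rfl
  have h2 : ∀ a b : G, (ω a 1 b : k) = 1 := fun a b => by rw [hnorm a 1 b (Or.inr (Or.inl rfl))]; rfl
  have h3 : ∀ a b : G, (ω a b 1 : k) = 1 := fun a b => by rw [hnorm a b 1 (Or.inr (Or.inr rfl))]; rfl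
  have hA : mulB3 ω
      (fun pqr => unitB k pqr.1 * WB k (pqr.2.1, pqr.2.2))
      (fun pqr => WB k (pqr.1, pqr.2.2) * unitB k pqr.2.1)
    = fun r => if r.1.2 = 1 ∧ r.2.1.2 = 1 ∧ r.2.2.2 = r.2.1.1 * r.1.1
        then (ω r.2.2.1 r.2.1.1 r.1.1 : k) else 0 := by
    funext r
    refine mySumCollapse _ (((r.1.1,(1:G)),((r.2.1.1,(1:G)),(r.2.2.1, r.2.1.1))))
        (((r.1.1,(1:G)),((r.2.1.1,(1:G)),(r.2.2.1*r.2.1.1, r.1.1)))) _ ?_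
    intro p q
    simp only [mB, unitB, WB, ite_zero_mul_ite_zero, one_mul, mul_one]
    split_ifs <;> first | rfl | simp_all [Prod.ext_iff, mul_one, one_mul]
  have hB : mulB3 ω
      (fun r => if r.1.2 = 1 ∧ r.2.1.2 = 1 ∧ r.2.2.2 = r.2.1.1 * r.1.1
        then (ω r.2.2.1 r.2.1.1 r.1.1 : k) else 0)
      (fun pqr => WB k (pqr.1, pqr.2.1) * unitB k pqr.2.2)
    = fun r => if r.1.2 = 1 ∧ r.2.1.2 = r.1.1 ∧ r.2.2.2 = r.2.1.1 * r.1.1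
        then (ω r.2.2.1 r.2.1.1 r.1.1 : k) else 0 := by
    funext r
    refine mySumCollapse _ (((r.1.1,(1:G)),((r.2.1.1,(1:G)),(r.2.2.1, r.2.1.1*r.1.1))))
        (((r.1.1,(1:G)),((r.2.1.1, r.1.1),(r.2.2.1*(r.2.1.1*r.1.1), (1:G))))) _ ?_
    intro p q
    simp only [mB, unitB, WB, ite_zero_mul_ite_zero, one_mul, mul_one]
    split_ifs <;> first | rfl | simp_all [Prod.ext_iff, mul_one, one_mul]
  have hC : mulB3 ω
      (fun pqr : (G × G) × (G × G) × (G × G) =>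
        if pqr.1.2 = 1 ∧ pqr.2.1.2 = 1 ∧ pqr.2.2.2 = 1 then
          (ω pqr.2.2.1 pqr.2.1.1 pqr.1.1 : k)
        else 0)
      (fun pqr => WB k (pqr.1, pqr.2.1) * unitB k pqr.2.2)
    = fun r => if r.1.2 = 1 ∧ r.2.1.2 = r.1.1 ∧ r.2.2.2 = 1
        then (ω r.2.2.1 r.2.1.1 r.1.1 : k) else 0 := by
    funext r
    refine mySumCollapse _ (((r.1.1,(1:G)),((r.2.1.1,(1:G)),(r.2.2.1,(1:G)))))
        (((r.1.1,(1:G)),((r.2.1.1, r.1.1),(r.2.2.1,(1:G))))) _ ?_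
    intro p q
    simp only [mB, unitB, WB, ite_zero_mul_ite_zero, one_mul, mul_one]
    split_ifs <;> first | rfl | simp_all [Prod.ext_iff, mul_one, one_mul]
  have hD : mulB3 ω
      (fun r => if r.1.2 = 1 ∧ r.2.1.2 = r.1.1 ∧ r.2.2.2 = 1
        then (ω r.2.2.1 r.2.1.1 r.1.1 : k) else 0)
      (fun pqr => unitB k pqr.1 * WB k (pqr.2.1, pqr.2.2))
    = fun r => if r.1.2 = 1 ∧ r.2.1.2 = r.1.1 ∧ r.2.2.2 = r.2.1.1 * r.1.1
        then (ω r.2.2.1 r.2.1.1 r.1.1 : k) else 0 := by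
    funext r
    refine mySumCollapse _ (((r.1.1,(1:G)),((r.2.1.1, r.1.1),(r.2.2.1,(1:G)))))
        (((r.1.1,(1:G)),((r.2.1.1*r.1.1,(1:G)),(r.2.2.1, r.2.1.1*r.1.1)))) _ ?_
    intro p q
    simp only [mB, unitB, WB, ite_zero_mul_ite_zero, one_mul, mul_one]
    split_ifs <;> first | rfl | simp_all [Prod.ext_iff, mul_one, one_mul]
  rw [hA, hB, hC, hD]
end

section
/- Let G be a finite group, ω a normalized 3-cocycle, and A = H₁^ω(G*) the twisted Heisenberg double with canonical element W = Σ_g (1 # δ_g) ⊗ (g # 1). If W is invertible in A ⊗ A, then ω(a, a⁻¹, a) = 1 for every a ∈ G. -/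
open Finset

/-- Structure constants of the twisted Heisenberg double `H₁^ω(G*)`:
`(g # δ_a)(h # δ_b) = [a = h*b] · ω(g,h,b) · (gh # δ_b)`.
A pair `(g, a)` encodes the basis element `g # δ_a`. -/
def mA {G : Type*} [Group G] [DecidableEq G] {k : Type*} [Field k]
    (ω : G → G → G → kˣ) (p q r : G × G) : k :=
  if p.2 = q.1 * q.2 ∧ r = (p.1 * q.1, q.2) then (ω p.1 q.1 q.2 : k) else 0

/-- The bilinear multiplication of `H₁^ω(G*)` on the free module `G × G → k`. -/
def mulA {G : Type*} [Group G] [Fintype G] [DecidableEq G] {k : Type*} [Field k]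
    (ω : G → G → G → kˣ) (x y : G × G → k) : G × G → k :=
  fun r => ∑ p : G × G, ∑ q : G × G, x p * y q * mA ω p q r

/-- Componentwise multiplication on the tensor square of `H₁^ω(G*)`. -/
def mulA2 {G : Type*} [Group G] [Fintype G] [DecidableEq G] {k : Type*} [Field k]
    (ω : G → G → G → kˣ) (x y : (G × G) × (G × G) → k) : (G × G) × (G × G) → k :=
  fun r => ∑ p : (G × G) × (G × G), ∑ q : (G × G) × (G × G),
    x p * y q * mA ω p.1 q.1 r.1 * mA ω p.2 q.2 r.2

/-- Componentwise multiplication on the tensor cube of `H₁^ω(G*)`. -/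
def mulA3 {G : Type*} [Group G] [Fintype G] [DecidableEq G] {k : Type*} [Field k]
    (ω : G → G → G → kˣ) (x y : (G × G) × (G × G) × (G × G) → k) :
    (G × G) × (G × G) × (G × G) → k :=
  fun r => ∑ p : (G × G) × (G × G) × (G × G), ∑ q : (G × G) × (G × G) × (G × G),
    x p * y q * mA ω p.1 q.1 r.1 * mA ω p.2.1 q.2.1 r.2.1 * mA ω p.2.2 q.2.2 r.2.2

/-- The unit `1_G # Σ_a δ_a` of `H₁^ω(G*)`. -/
def unitA {G : Type*} [Group G] [DecidableEq G] (k : Type*) [Field k] :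
    G × G → k :=
  fun p => if p.1 = 1 then 1 else 0

/-- The canonical element `W = Σ_g (1_G # δ_g) ⊗ (g # Σ_a δ_a)` of `H₁^ω(G*)⊗²`. -/
def WA {G : Type*} [Group G] [DecidableEq G] (k : Type*) [Field k] :
    (G × G) × (G × G) → k :=
  fun pq => if pq.1.1 = 1 ∧ pq.2.1 = pq.1.2 then 1 else 0

/-- The unit of `H₁^ω(G*) ⊗ H₁^ω(G*)`. -/
def unitA2 {G : Type*} [Group G] [DecidableEq G] (k : Type*) [Field k] :
    (G × G) × (G × G) → k :=
  fun pq => unitA k pq.1 * unitA k pq.2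

section Aux

variable {G : Type*} [Group G] [Fintype G] [DecidableEq G] {k : Type*} [Field k]

lemma aux_WV (ω : G → G → G → kˣ)
    (hnorm : ∀ a b c : G, a = 1 ∨ b = 1 ∨ c = 1 → ω a b c = 1)
    (a : G) (V : (G × G) × (G × G) → k) :
    mulA2 ω (WA k) V (((1 : G), a), ((1 : G), a))
      = (ω a a⁻¹ a : k) * V (((1 : G), a), (a⁻¹, a)) := by
  have hterm : ∀ p q : (G × G) × (G × G),
      WA k p * V q * mA ω p.1 q.1 ((1 : G), a) * mA ω p.2 q.2 ((1 : G), a)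
      = if p = (((1 : G), a), (a, (1 : G))) ∧ q = (((1 : G), a), (a⁻¹, a)) then
          (ω a a⁻¹ a : k) * V (((1 : G), a), (a⁻¹, a)) else 0 := by
    rintro ⟨⟨p11, p12⟩, p21, p22⟩ ⟨⟨q11, q12⟩, q21, q22⟩
    simp only [mA, WA, Prod.mk.injEq]
    by_cases H : (p11 = 1 ∧ p21 = p12) ∧ (p12 = q11 * q12 ∧ (1 : G) = p11 * q11 ∧ a = q12)
        ∧ (p22 = q21 * q22 ∧ (1 : G) = p21 * q21 ∧ a = q22)
    · obtain ⟨⟨h1, h2⟩, ⟨h3, h4, h5⟩, h6, h7, h8⟩ := H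
      have hq11 : q11 = 1 := by rw [h1, one_mul] at h4; exact h4.symm
      have hq12 : q12 = a := h5.symm
      have hp12 : p12 = a := by rw [h3, hq11, one_mul, hq12]
      have hp21 : p21 = a := h2.trans hp12
      have hq21 : q21 = a⁻¹ := by
        have h : a * q21 = 1 := by rw [← hp21]; exact h7.symm
        exact eq_inv_of_mul_eq_one_right h
      have hq22 : q22 = a := h8.symm
      have hp22 : p22 = 1 := by rw [h6, hq21, hq22, inv_mul_cancel]
      simp only [h1, hp12, hp21, hp22, hq11, hq12, hq21, hq22]
      simp [hnorm 1 1 a (Or.inl rfl), mul_comm]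
    · have hR : ¬(((p11 = 1 ∧ p12 = a) ∧ p21 = a ∧ p22 = 1) ∧
          (q11 = 1 ∧ q12 = a) ∧ q21 = a⁻¹ ∧ q22 = a) := by
        rintro ⟨⟨⟨e1, e2⟩, e3, e4⟩, ⟨e5, e6⟩, e7, e8⟩
        subst e1; subst e2; subst e3; subst e4; subst e5; subst e6; subst e7; subst e8
        exact H (by simp)
      rw [if_neg hR]
      by_cases hW : p11 = 1 ∧ p21 = p12
      · by_cases hC : p12 = q11 * q12 ∧ (1 : G) = p11 * q11 ∧ a = q12
        · have hD : ¬(p22 = q21 * q22 ∧ (1 : G) = p21 * q21 ∧ a = q22) :=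
            fun hD => H ⟨hW, hC, hD⟩
          simp [hD]
        · simp [hC]
      · simp [hW]
  calc mulA2 ω (WA k) V (((1 : G), a), ((1 : G), a))
      = ∑ p : (G × G) × (G × G), ∑ q : (G × G) × (G × G),
          if p = (((1 : G), a), (a, (1 : G))) ∧ q = (((1 : G), a), (a⁻¹, a)) then
            (ω a a⁻¹ a : k) * V (((1 : G), a), (a⁻¹, a)) else 0 := by
        unfold mulA2
        exact Finset.sum_congr rfl fun p _ => Finset.sum_congr rfl fun q _ => hterm p q
    _ = (ω a a⁻¹ a : k) * V (((1 : G), a), (a⁻¹, a)) := by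
        simp [ite_and, Finset.sum_ite_eq]

lemma aux_VW (ω : G → G → G → kˣ)
    (hnorm : ∀ a b c : G, a = 1 ∨ b = 1 ∨ c = 1 → ω a b c = 1)
    (a : G) (V : (G × G) × (G × G) → k) :
    mulA2 ω V (WA k) (((1 : G), a), ((1 : G), (1 : G)))
      = V (((1 : G), a), (a⁻¹, a)) := by
  have hterm : ∀ p q : (G × G) × (G × G),
      V p * WA k q * mA ω p.1 q.1 ((1 : G), a) * mA ω p.2 q.2 ((1 : G), (1 : G))
      = if p = (((1 : G), a), (a⁻¹, a)) ∧ q = (((1 : G), a), (a, (1 : G))) then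
          V (((1 : G), a), (a⁻¹, a)) else 0 := by
    rintro ⟨⟨p11, p12⟩, p21, p22⟩ ⟨⟨q11, q12⟩, q21, q22⟩
    simp only [mA, WA, Prod.mk.injEq]
    by_cases H : (q11 = 1 ∧ q21 = q12) ∧ (p12 = q11 * q12 ∧ (1 : G) = p11 * q11 ∧ a = q12)
        ∧ (p22 = q21 * q22 ∧ (1 : G) = p21 * q21 ∧ (1 : G) = q22)
    · obtain ⟨⟨h1, h2⟩, ⟨h3, h4, h5⟩, h6, h7, h8⟩ := H
      have hp11 : p11 = 1 := by rw [h1, mul_one] at h4; exact h4.symm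
      have hq12 : q12 = a := h5.symm
      have hp12 : p12 = a := by rw [h3, h1, one_mul, hq12]
      have hq21 : q21 = a := h2.trans hq12
      have hq22 : q22 = 1 := h8.symm
      have hp21 : p21 = a⁻¹ := by
        have h : p21 * a = 1 := by rw [← hq21]; exact h7.symm
        exact eq_inv_of_mul_eq_one_left h
      have hp22 : p22 = a := by rw [h6, hq21, hq22, mul_one]
      simp only [h1, hp11, hp12, hp21, hp22, hq12, hq21, hq22]
      simp [hnorm 1 1 a (Or.inl rfl), hnorm a⁻¹ a 1 (Or.inr (Or.inr rfl))]
    · have hR : ¬(((p11 = 1 ∧ p12 = a) ∧ p21 = a⁻¹ ∧ p22 = a) ∧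
          (q11 = 1 ∧ q12 = a) ∧ q21 = a ∧ q22 = 1) := by
        rintro ⟨⟨⟨e1, e2⟩, e3, e4⟩, ⟨e5, e6⟩, e7, e8⟩
        subst e1; subst e2; subst e3; subst e4; subst e5; subst e6; subst e7; subst e8
        exact H (by simp)
      rw [if_neg hR]
      by_cases hW : q11 = 1 ∧ q21 = q12
      · by_cases hC : p12 = q11 * q12 ∧ (1 : G) = p11 * q11 ∧ a = q12
        · have hD : ¬(p22 = q21 * q22 ∧ (1 : G) = p21 * q21 ∧ (1 : G) = q22) :=
            fun hD => H ⟨hW, hC, hD⟩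
          simp [hD]
        · simp [hC]
      · simp [hW]
  calc mulA2 ω V (WA k) (((1 : G), a), ((1 : G), (1 : G)))
      = ∑ p : (G × G) × (G × G), ∑ q : (G × G) × (G × G),
          if p = (((1 : G), a), (a⁻¹, a)) ∧ q = (((1 : G), a), (a, (1 : G))) then
            V (((1 : G), a), (a⁻¹, a)) else 0 := by
        unfold mulA2
        exact Finset.sum_congr rfl fun p _ => Finset.sum_congr rfl fun q _ => hterm p q
    _ = V (((1 : G), a), (a⁻¹, a)) := by
        simp [ite_and, Finset.sum_ite_eq]

end Aux

/-- if the canonical element `W` of `H₁^ω(G*)⊗²` is invertible,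
then `ω(a,a⁻¹,a) = 1` for every `a ∈ G`. -/
theorem stmt_7 {G : Type*} [Group G] [Fintype G] [DecidableEq G] {k : Type*} [Field k]
    (ω : G → G → G → kˣ)
    (hcoc : ∀ a b c d : G,
      ω a b c * ω a (b * c) d * ω b c d = ω (a * b) c d * ω a b (c * d))
    (hnorm : ∀ a b c : G, a = 1 ∨ b = 1 ∨ c = 1 → ω a b c = 1)
    (hinv : ∃ V : (G × G) × (G × G) → k,
      mulA2 ω (WA k) V = unitA2 k ∧ mulA2 ω V (WA k) = unitA2 k) :
    ∀ a : G, ω a a⁻¹ a = 1 := by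
  obtain ⟨V, h1, h2⟩ := hinv
  intro a
  have e1 : (ω a a⁻¹ a : k) * V (((1 : G), a), (a⁻¹, a)) = 1 := by
    have := congrFun h1 (((1 : G), a), ((1 : G), a))
    rw [aux_WV ω hnorm a V] at this
    simpa [unitA2, unitA] using this
  have e2 : V (((1 : G), a), (a⁻¹, a)) = 1 := by
    have := congrFun h2 (((1 : G), a), ((1 : G), (1 : G)))
    rw [aux_VW ω hnorm a V] at this
    simpa [unitA2, unitA] using this
  rw [e2, mul_one] at e1
  exact Units.ext e1
end

section
/- Let H be a finite-dimensional Hopf algebra over a field k with basis {e_i} and dual basis {e^i}. In the Heisenberg double H(H*) = H* # H (smash product with multiplication (ξ # a)(ν # b) = ξ ∗ (a₁ ⇀ ν) # a₂ b), the canonical element W = Σ_i (ε # e_i) ⊗ (e^i # 1) satisfies the pentagon equation W₁₂ W₁₃ W₂₃ = W₂₃ W₁₂ in (H* # H)^⊗3. -/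
open TensorProduct

noncomputable section

variable (k H : Type*) [CommRing k] [Ring H] [HopfAlgebra k H]

/-- The right action of `H` on `H*`: `(a ⇀ ν)(b) = ν(ba)`, as a bilinear map. -/
def rActL : H →ₗ[k] Module.Dual k H →ₗ[k] Module.Dual k H :=
  LinearMap.mk₂ k (fun a ν => ν ∘ₗ LinearMap.mulRight k a)
    (fun a a' ν => by ext b; simp [mul_add])
    (fun c a ν => by ext b; simp [mul_smul_comm])
    (fun a ν ν' => by ext b; simp)
    (fun c a ν => by ext b; simp)

/-- `H ⊗ H* → H*`, `a ⊗ ν ↦ (a ⇀ ν)`. -/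
def rActT : H ⊗[k] Module.Dual k H →ₗ[k] Module.Dual k H :=
  TensorProduct.lift (rActL k H)

/-- The convolution product on `H*`: `(ξ ∗ ν)(h) = Σ ξ(h₁)ν(h₂)`, as a bilinear map. -/
def convL : Module.Dual k H →ₗ[k] Module.Dual k H →ₗ[k] Module.Dual k H :=
  LinearMap.mk₂ k
    (fun ξ ν => LinearMap.mul' k k ∘ₗ TensorProduct.map ξ ν ∘ₗ Coalgebra.comul)
    (fun ξ ξ' ν => by
      simp [TensorProduct.map_add_left, LinearMap.comp_add, LinearMap.add_comp])
    (fun c ξ ν => by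
      simp [TensorProduct.map_smul_left, LinearMap.comp_smul, LinearMap.smul_comp])
    (fun ξ ν ν' => by
      simp [TensorProduct.map_add_right, LinearMap.comp_add, LinearMap.add_comp])
    (fun c ξ ν => by
      simp [TensorProduct.map_smul_right, LinearMap.comp_smul, LinearMap.smul_comp])

/-- `H* ⊗ H* → H*`, convolution. -/
def convT : Module.Dual k H ⊗[k] Module.Dual k H →ₗ[k] Module.Dual k H :=
  TensorProduct.lift (convL k H)

/-- The underlying space of the Heisenberg double `H(H*) = H* # H`. -/
abbrev HD := Module.Dual k H ⊗[k] H

/-- The multiplication `(ξ # a)(ν # b) = Σ ξ ∗ (a₁ ⇀ ν) # a₂b` of the Heisenberg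
double `H(H*)`, as a linear map on the tensor square. -/
def hmulT : HD k H ⊗[k] HD k H →ₗ[k] HD k H :=
  TensorProduct.map (convT k H) LinearMap.id
    ∘ₗ (TensorProduct.assoc k (Module.Dual k H) (Module.Dual k H) H).symm.toLinearMap
    ∘ₗ TensorProduct.map LinearMap.id (TensorProduct.map (rActT k H) LinearMap.id)
    ∘ₗ TensorProduct.map LinearMap.id
        (TensorProduct.assoc k H (Module.Dual k H) H).symm.toLinearMap
    ∘ₗ (TensorProduct.assoc k (Module.Dual k H) H (Module.Dual k H ⊗[k] H)).toLinearMap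
    ∘ₗ (TensorProduct.tensorTensorTensorComm k (Module.Dual k H) (Module.Dual k H) H H).toLinearMap
    ∘ₗ TensorProduct.map LinearMap.id (TensorProduct.map LinearMap.id (LinearMap.mul' k H))
    ∘ₗ TensorProduct.map LinearMap.id (TensorProduct.assoc k H H H).toLinearMap
    ∘ₗ TensorProduct.map LinearMap.id (TensorProduct.map Coalgebra.comul LinearMap.id)
    ∘ₗ (TensorProduct.tensorTensorTensorComm k (Module.Dual k H) H (Module.Dual k H) H).toLinearMap

/-- The product of two elements of the Heisenberg double `H(H*)`. -/
def hmul (x y : HD k H) : HD k H := hmulT k H (x ⊗ₜ y)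

/-- The unit `ε # 1` of the Heisenberg double. -/
def hone : HD k H := (Coalgebra.counit : Module.Dual k H) ⊗ₜ (1 : H)

/-- Componentwise multiplication on `H(H*) ⊗ H(H*)`. -/
def hmul2T : (HD k H ⊗[k] HD k H) ⊗[k] (HD k H ⊗[k] HD k H) →ₗ[k] HD k H ⊗[k] HD k H :=
  TensorProduct.map (hmulT k H) (hmulT k H)
    ∘ₗ (TensorProduct.tensorTensorTensorComm k (HD k H) (HD k H) (HD k H) (HD k H)).toLinearMap

def hmul2 (x y : HD k H ⊗[k] HD k H) : HD k H ⊗[k] HD k H := hmul2T k H (x ⊗ₜ y)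

/-- Componentwise multiplication on `H(H*) ⊗ H(H*) ⊗ H(H*)`. -/
def hmul3T :
    (HD k H ⊗[k] (HD k H ⊗[k] HD k H)) ⊗[k] (HD k H ⊗[k] (HD k H ⊗[k] HD k H)) →ₗ[k]
      HD k H ⊗[k] (HD k H ⊗[k] HD k H) :=
  TensorProduct.map (hmulT k H) (hmul2T k H)
    ∘ₗ (TensorProduct.tensorTensorTensorComm k (HD k H) (HD k H ⊗[k] HD k H)
          (HD k H) (HD k H ⊗[k] HD k H)).toLinearMap

def hmul3 (x y : HD k H ⊗[k] (HD k H ⊗[k] HD k H)) :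
    HD k H ⊗[k] (HD k H ⊗[k] HD k H) := hmul3T k H (x ⊗ₜ y)

/-- The embedding of `H(H*)⊗²` in legs 1,2 of the triple tensor power. -/
def leg12 : HD k H ⊗[k] HD k H →ₗ[k] HD k H ⊗[k] (HD k H ⊗[k] HD k H) :=
  TensorProduct.map LinearMap.id
    ((TensorProduct.mk k (HD k H) (HD k H)).flip (hone k H))

/-- The embedding of `H(H*)⊗²` in legs 1,3 of the triple tensor power. -/
def leg13 : HD k H ⊗[k] HD k H →ₗ[k] HD k H ⊗[k] (HD k H ⊗[k] HD k H) :=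
  TensorProduct.map LinearMap.id (TensorProduct.mk k (HD k H) (HD k H) (hone k H))

/-- The embedding of `H(H*)⊗²` in legs 2,3 of the triple tensor power. -/
def leg23 : HD k H ⊗[k] HD k H →ₗ[k] HD k H ⊗[k] (HD k H ⊗[k] HD k H) :=
  TensorProduct.mk k (HD k H) (HD k H ⊗[k] HD k H) (hone k H)

/-- The canonical element `W = Σ_i (ε # e_i) ⊗ (e^i # 1)`. -/
def canW {I : Type*} [Fintype I] (B : Module.Basis I k H) : HD k H ⊗[k] HD k H :=
  ∑ i : I, ((Coalgebra.counit : Module.Dual k H) ⊗ₜ B i) ⊗ₜ ((B.coord i) ⊗ₜ (1 : H))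

end

/-!
Expanding in the basis, `W₁₂W₁₃W₂₃ = Σ (ε # eᵢeⱼ) ⊗ (eⁱ # eₗ) ⊗ (eʲ ∗ eˡ # 1)` and
`W₂₃W₁₂ = Σ (ε # eᵢ) ⊗ (ε # eₗ)(eⁱ # 1) ⊗ (eˡ # 1)`, where `(ε # a)(ν # 1) = Σ (a₁ ⇀ ν) # a₂`.
Two dual-basis identities turn the first sum into the second:
`Σᵢ eᵢa ⊗ eⁱ = Σᵢ eᵢ ⊗ (a ⇀ eⁱ)` and `Σⱼₗ eⱼ ⊗ eₗ ⊗ eʲ ∗ eˡ = Σₚ Δ(eₚ) ⊗ eᵖ`.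
Both are instances of `Σᵢ f(bᵢ) ⊗ bⁱ = Σⱼ cⱼ ⊗ (cʲ ∘ f)` for a linear map `f` between free
modules: right multiplication by `a`, and the coproduct with the basis `eⱼ ⊗ eₗ` of `H ⊗ H`.
-/

theorem Module.Basis.sum_tmul_coord_comp {R M N ι κ : Type*} [CommSemiring R]
    [AddCommMonoid M] [Module R M] [AddCommMonoid N] [Module R N] [Fintype ι] [Fintype κ]
    (b : Module.Basis ι R M) (c : Module.Basis κ R N) (f : M →ₗ[R] N) :
    ∑ i, f (b i) ⊗ₜ[R] b.coord i = ∑ j, c j ⊗ₜ[R] (c.coord j ∘ₗ f) := by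
  calc ∑ i, f (b i) ⊗ₜ[R] b.coord i
      = ∑ i, ∑ j, c j ⊗ₜ[R] (c.coord j (f (b i)) • b.coord i) := by
        refine Finset.sum_congr rfl fun i _ => ?_
        conv_lhs => rw [← c.sum_repr (f (b i)), sum_tmul]
        simp only [smul_tmul, Module.Basis.coord_apply]
    _ = ∑ j, c j ⊗ₜ[R] ∑ i, (c.coord j ∘ₗ f) (b i) • b.coord i := by
        rw [Finset.sum_comm]
        simp only [tmul_sum, LinearMap.comp_apply]
    _ = ∑ j, c j ⊗ₜ[R] (c.coord j ∘ₗ f) := by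
        simp only [Module.Basis.sum_dual_apply_smul_coord]

theorem TensorProduct.map_smulRight_counit_comul {R C V W : Type*} [CommSemiring R]
    [AddCommMonoid C] [Module R C] [Coalgebra R C] [AddCommMonoid V] [Module R V]
    [AddCommMonoid W] [Module R W] (v : V) (g : C →ₗ[R] W) (c : C) :
    TensorProduct.map (Coalgebra.counit.smulRight v) g (Coalgebra.comul c) = v ⊗ₜ g c := by
  have : (Coalgebra.counit : C →ₗ[R] R).smulRight v
      = LinearMap.toSpanSingleton R V v ∘ₗ Coalgebra.counit := by
    ext; simp
  rw [this, ← LinearMap.map_rTensor, Coalgebra.rTensor_counit_comul, map_tmul,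
    LinearMap.toSpanSingleton_apply, one_smul]

section
variable {k H : Type*} [CommRing k] [Ring H] [HopfAlgebra k H]

theorem convL_counit_left (ν : Module.Dual k H) : convL k H Coalgebra.counit ν = ν := by
  ext h
  simp only [convL, LinearMap.mk₂_apply, LinearMap.coe_comp, Function.comp_apply]
  rw [← LinearMap.lTensor_comp_rTensor, LinearMap.comp_apply, Coalgebra.rTensor_counit_comul,
    LinearMap.lTensor_tmul]
  simp

theorem convL_counit_right (ξ : Module.Dual k H) : convL k H ξ Coalgebra.counit = ξ := by
  ext h
  simp only [convL, LinearMap.mk₂_apply, LinearMap.coe_comp, Function.comp_apply]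
  rw [← LinearMap.rTensor_comp_lTensor, LinearMap.comp_apply, Coalgebra.lTensor_counit_comul,
    LinearMap.rTensor_tmul]
  simp

theorem rActL_counit (a : H) :
    rActL k H a Coalgebra.counit = (Coalgebra.counit : H →ₗ[k] k) a • Coalgebra.counit := by
  ext b
  simp [rActL, mul_comm]

theorem convL_comp_rActL_counit (ξ : Module.Dual k H) :
    convL k H ξ ∘ₗ (rActL k H).flip Coalgebra.counit
      = (Coalgebra.counit : H →ₗ[k] k).smulRight ξ := by
  ext a : 1
  simp [rActL_counit, convL_counit_right]

theorem hmul_tmul (ξ ν : Module.Dual k H) (a b : H) :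
    hmul k H (ξ ⊗ₜ a) (ν ⊗ₜ b)
      = TensorProduct.map (convL k H ξ ∘ₗ (rActL k H).flip ν) (LinearMap.mulRight k b)
          (Coalgebra.comul a) := by
  simp only [hmul, hmulT, LinearMap.coe_comp, Function.comp_apply, LinearEquiv.coe_coe,
    tensorTensorTensorComm_tmul, map_tmul, LinearMap.id_coe, id_eq]
  induction (Coalgebra.comul (R := k) a) using TensorProduct.induction_on with
  | zero => simp
  | tmul x y => simp [rActT, convT, convL, rActL]
  | add u v hu hv => simp only [add_tmul, tmul_add, map_add, hu, hv]

theorem hmul_tmul_one_left (ξ ν : Module.Dual k H) (b : H) :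
    hmul k H (ξ ⊗ₜ 1) (ν ⊗ₜ b) = convL k H ξ ν ⊗ₜ b := by
  rw [hmul_tmul, Bialgebra.comul_one, Algebra.TensorProduct.one_def, map_tmul]
  simp [rActL]

theorem hmul_counit_tmul_tmul_one (ν : Module.Dual k H) (a : H) :
    hmul k H (Coalgebra.counit ⊗ₜ a) (ν ⊗ₜ 1)
      = TensorProduct.map ((rActL k H).flip ν) LinearMap.id (Coalgebra.comul a) := by
  rw [hmul_tmul, LinearMap.mulRight_one]
  congr 2
  ext a' : 1
  rw [LinearMap.comp_apply, convL_counit_left]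

theorem hmul_counit_tmul_counit_tmul (a b : H) :
    hmul k H (Coalgebra.counit ⊗ₜ a) (Coalgebra.counit ⊗ₜ b) = Coalgebra.counit ⊗ₜ (a * b) := by
  rw [hmul_tmul, convL_comp_rActL_counit, TensorProduct.map_smulRight_counit_comul,
    LinearMap.mulRight_apply]

theorem hmul_hone_left (x : HD k H) : hmul k H (hone k H) x = x := by
  induction x using TensorProduct.induction_on with
  | zero => simp [hmul]
  | tmul ν b => rw [hone, hmul_tmul_one_left, convL_counit_left]
  | add x y hx hy => simp only [hmul, tmul_add, map_add] at hx hy ⊢; rw [hx, hy]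

theorem hmul_hone_right (x : HD k H) : hmul k H x (hone k H) = x := by
  induction x using TensorProduct.induction_on with
  | zero => simp [hmul]
  | tmul ξ a =>
    rw [hone, hmul_tmul, convL_comp_rActL_counit, TensorProduct.map_smulRight_counit_comul,
      LinearMap.mulRight_one, LinearMap.id_apply]
  | add x y hx hy => simp only [hmul, add_tmul, map_add] at hx hy ⊢; rw [hx, hy]

theorem hmul3_tmul (x x' y y' z z' : HD k H) :
    hmul3 k H (x ⊗ₜ (y ⊗ₜ z)) (x' ⊗ₜ (y' ⊗ₜ z'))
      = hmul k H x x' ⊗ₜ (hmul k H y y' ⊗ₜ hmul k H z z') := by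
  simp only [hmul3, hmul3T, hmul2T, hmul, LinearMap.coe_comp, Function.comp_apply,
    LinearEquiv.coe_coe, tensorTensorTensorComm_tmul, map_tmul]

theorem hmul3_sum_left {α : Type*} (s : Finset α) (x : α → HD k H ⊗[k] (HD k H ⊗[k] HD k H))
    (y : HD k H ⊗[k] (HD k H ⊗[k] HD k H)) :
    hmul3 k H (∑ i ∈ s, x i) y = ∑ i ∈ s, hmul3 k H (x i) y := by
  simp only [hmul3, sum_tmul, map_sum]

theorem hmul3_sum_right {α : Type*} (s : Finset α) (x : HD k H ⊗[k] (HD k H ⊗[k] HD k H))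
    (y : α → HD k H ⊗[k] (HD k H ⊗[k] HD k H)) :
    hmul3 k H x (∑ i ∈ s, y i) = ∑ i ∈ s, hmul3 k H x (y i) := by
  simp only [hmul3, tmul_sum, map_sum]

theorem coord_tensorProduct_comp_comul {I : Type*} (B : Module.Basis I k H) (j l : I) :
    (B.tensorProduct B).coord (j, l) ∘ₗ Coalgebra.comul = convL k H (B.coord j) (B.coord l) := by
  ext h
  simp only [LinearMap.comp_apply, convL, LinearMap.mk₂_apply]
  induction (Coalgebra.comul (R := k) h) using TensorProduct.induction_on with
  | zero => simp
  | tmul x y => simp [mul_comm]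
  | add u v hu hv => simp only [map_add, hu, hv]

variable {I : Type*} [Fintype I] (B : Module.Basis I k H)

theorem sum_mul_tmul_coord (a : H) :
    ∑ i, (B i * a) ⊗ₜ[k] B.coord i = ∑ i, B i ⊗ₜ[k] rActL k H a (B.coord i) :=
  B.sum_tmul_coord_comp B (LinearMap.mulRight k a)

theorem sum_comul_tmul_coord :
    ∑ p, Coalgebra.comul (R := k) (B p) ⊗ₜ[k] B.coord p
      = ∑ l, ∑ j, (B j ⊗ₜ[k] B l) ⊗ₜ[k] convL k H (B.coord j) (B.coord l) := by
  rw [B.sum_tmul_coord_comp (B.tensorProduct B), Fintype.sum_prod_type_right]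
  simp only [Module.Basis.tensorProduct_apply, coord_tensorProduct_comp_comul]

theorem sum_counit_tmul_mul_tmul_coord (a y : H) (w : HD k H) :
    ∑ i, ((Coalgebra.counit : Module.Dual k H) ⊗ₜ[k] (B i * a)) ⊗ₜ[k] ((B.coord i ⊗ₜ[k] y) ⊗ₜ[k] w)
      = ∑ i, ((Coalgebra.counit : Module.Dual k H) ⊗ₜ[k] B i) ⊗ₜ[k]
          ((rActL k H a (B.coord i) ⊗ₜ[k] y) ⊗ₜ[k] w) := by
  simpa only [map_sum, map_tmul, LinearMap.coe_comp, Function.comp_apply, TensorProduct.mk_apply,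
    LinearMap.flip_apply] using congrArg (TensorProduct.map
      (TensorProduct.mk k (Module.Dual k H) H Coalgebra.counit)
      ((TensorProduct.mk k (HD k H) (HD k H)).flip w ∘ₗ (TensorProduct.mk k _ H).flip y))
    (sum_mul_tmul_coord B a)

theorem sum_rActL_tmul_tmul_convL (μ : Module.Dual k H) :
    ∑ l, ∑ j, (rActL k H (B j) μ ⊗ₜ[k] B l) ⊗ₜ[k]
        (convL k H (B.coord j) (B.coord l) ⊗ₜ[k] (1 : H))
      = ∑ p, TensorProduct.map ((rActL k H).flip μ) LinearMap.id (Coalgebra.comul (B p))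
          ⊗ₜ[k] (B.coord p ⊗ₜ[k] (1 : H)) := by
  simpa only [map_sum, map_tmul, TensorProduct.mk_apply, LinearMap.flip_apply,
    LinearMap.id_coe, id_eq] using congrArg (TensorProduct.map
      (TensorProduct.map ((rActL k H).flip μ) LinearMap.id)
      ((TensorProduct.mk k (Module.Dual k H) H).flip 1)) (sum_comul_tmul_coord B).symm

theorem leg12_canW :
    leg12 k H (canW k H B)
      = ∑ i, (Coalgebra.counit ⊗ₜ B i) ⊗ₜ ((B.coord i ⊗ₜ 1) ⊗ₜ hone k H) := by
  simp only [canW, leg12, map_sum, map_tmul, LinearMap.id_coe, id_eq, LinearMap.flip_apply,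
    TensorProduct.mk_apply]

theorem leg13_canW :
    leg13 k H (canW k H B)
      = ∑ i, (Coalgebra.counit ⊗ₜ B i) ⊗ₜ (hone k H ⊗ₜ (B.coord i ⊗ₜ 1)) := by
  simp only [canW, leg13, map_sum, map_tmul, LinearMap.id_coe, id_eq, TensorProduct.mk_apply]

theorem leg23_canW :
    leg23 k H (canW k H B)
      = ∑ i, hone k H ⊗ₜ ((Coalgebra.counit ⊗ₜ B i) ⊗ₜ (B.coord i ⊗ₜ 1)) := by
  simp only [canW, leg23, map_sum, TensorProduct.mk_apply]

theorem canW₁₂_mul_canW₁₃ :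
    hmul3 k H (leg12 k H (canW k H B)) (leg13 k H (canW k H B))
      = ∑ j, ∑ i, (Coalgebra.counit ⊗ₜ (B i * B j)) ⊗ₜ
          ((B.coord i ⊗ₜ 1) ⊗ₜ (B.coord j ⊗ₜ 1)) := by
  simp only [leg12_canW, leg13_canW, hmul3_sum_left, hmul3_sum_right, hmul3_tmul,
    hmul_counit_tmul_counit_tmul, hmul_hone_left, hmul_hone_right]

theorem canW₁₂_mul_canW₁₃_mul_canW₂₃ :
    hmul3 k H (hmul3 k H (leg12 k H (canW k H B)) (leg13 k H (canW k H B)))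
        (leg23 k H (canW k H B))
      = ∑ l, ∑ j, ∑ i, (Coalgebra.counit ⊗ₜ (B i * B j)) ⊗ₜ
          ((B.coord i ⊗ₜ B l) ⊗ₜ (convL k H (B.coord j) (B.coord l) ⊗ₜ 1)) := by
  simp only [canW₁₂_mul_canW₁₃, leg23_canW, hmul3_sum_left, hmul3_sum_right, hmul3_tmul,
    hmul_hone_right, hmul_tmul_one_left, convL_counit_right]

theorem canW₂₃_mul_canW₁₂ :
    hmul3 k H (leg23 k H (canW k H B)) (leg12 k H (canW k H B))
      = ∑ i, ∑ l, (Coalgebra.counit ⊗ₜ B i) ⊗ₜ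
          (TensorProduct.map ((rActL k H).flip (B.coord i)) LinearMap.id
            (Coalgebra.comul (B l)) ⊗ₜ (B.coord l ⊗ₜ 1)) := by
  simp only [leg23_canW, leg12_canW, hmul3_sum_left, hmul3_sum_right, hmul3_tmul, hmul_hone_left,
    hmul_hone_right, hmul_counit_tmul_tmul_one]

end

/-- the canonical element `W = Σ_i (ε # e_i) ⊗ (e^i # 1)` of the
Heisenberg double `H(H*)` of a finite-dimensional Hopf algebra satisfies the
pentagon equation `W₁₂ W₁₃ W₂₃ = W₂₃ W₁₂`. -/
theorem stmt_9 {k H : Type*} [Field k] [Ring H] [HopfAlgebra k H]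
    {I : Type*} [Fintype I] (B : Module.Basis I k H) :
    hmul3 k H
      (hmul3 k H (leg12 k H (canW k H B)) (leg13 k H (canW k H B)))
      (leg23 k H (canW k H B))
    = hmul3 k H (leg23 k H (canW k H B)) (leg12 k H (canW k H B)) := by
  rw [canW₁₂_mul_canW₁₃_mul_canW₂₃, canW₂₃_mul_canW₁₂]
  simp only [sum_counit_tmul_mul_tmul_coord]
  rw [Finset.sum_comm_cycle]
  simp only [← tmul_sum, sum_rActL_tmul_tmul_convL]
end

section
/- Let G be a finite group, ω a normalized 3-cocycle, and consider the twisted Heisenberg double H₁^ω(G) with product (δ_a # g)(δ_b # h) = δ_{b,ag} ω(a,g,h) (δ_a # gh). Let W̄ = Σ_g (δ_g # 1) ⊗ (1 # g) with 1 in the first slot meaning Σ_a δ_a, and suppose W̄ is invertible in the tensor square. Then ω(a, a⁻¹, a) = 1 for all a ∈ G. -/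
open Finset

/-- The unit of `H₁^ω(G) ⊗ H₁^ω(G)`. -/
def unitB2 {G : Type*} [Group G] [DecidableEq G] (k : Type*) [Field k] :
    (G × G) × (G × G) → k :=
  fun pq => unitB k pq.1 * unitB k pq.2

/-- if the canonical element `W̄` of `H₁^ω(G)⊗²` is invertible,
then `ω(a,a⁻¹,a) = 1` for every `a ∈ G`. -/
theorem stmt_14 {G : Type*} [Group G] [Fintype G] [DecidableEq G] {k : Type*} [Field k]
    (ω : G → G → G → kˣ)
    (hcoc : ∀ a b c d : G,
      ω a b c * ω a (b * c) d * ω b c d = ω (a * b) c d * ω a b (c * d))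
    (hnorm : ∀ a b c : G, a = 1 ∨ b = 1 ∨ c = 1 → ω a b c = 1)
    (hinv : ∃ V : (G × G) × (G × G) → k,
      mulB2 ω (WB k) V = unitB2 k ∧ mulB2 ω V (WB k) = unitB2 k) :
    ∀ a : G, ω a a⁻¹ a = 1 := by
  intro a
  obtain ⟨V, hL, hR⟩ := hinv
  have hA := congrFun hL ((a, (1:G)), (a * a⁻¹, (1:G)))
  have hB := congrFun hR ((a, (1:G)), (a, (1:G)))
  simp only [mulB2, unitB2, unitB, if_pos rfl] at hA hB
  have n1 : (ω a 1 1 : k) = 1 := by rw [hnorm a 1 1 (by simp)]; simp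
  -- Evaluate hA
  have eA : (∑ p : (G × G) × (G × G), ∑ q : (G × G) × (G × G),
      WB k p * V q * mB ω p.1 q.1 ((a,(1:G)),(a*a⁻¹,(1:G))).1 * mB ω p.2 q.2 ((a,(1:G)),(a*a⁻¹,(1:G))).2)
      = WB k ((a,1),(a*a⁻¹,a)) * V ((a,1),(a,a⁻¹)) *
        mB ω (a,1) (a,1) (a,1) * mB ω (a*a⁻¹,a) (a,a⁻¹) (a*a⁻¹,1) := by
    rw [Fintype.sum_eq_single (((a,(1:G)),(a*a⁻¹,a)) : (G×G)×(G×G))]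
    · rw [Fintype.sum_eq_single (((a,(1:G)),(a,a⁻¹)) : (G×G)×(G×G))]
      rintro ⟨⟨q11,q12⟩,⟨q21,q22⟩⟩ hq
      simp only [mB, WB, Prod.mk.injEq]
      split_ifs with h1 h2 h3 <;> try ring
      exfalso; apply hq
      obtain ⟨h2a, -, h2c⟩ := h2
      obtain ⟨h3a, -, h3c⟩ := h3
      have e1 : q12 = 1 := by rw [one_mul] at h2c; exact h2c.symm
      have e2 : q22 = a⁻¹ := eq_inv_of_mul_eq_one_right h3c.symm
      simp only [Prod.mk.injEq]
      refine ⟨⟨by simpa using h2a, e1⟩, ?_, e2⟩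
      rw [h3a]; group
    · rintro ⟨⟨p11,p12⟩,⟨p21,p22⟩⟩ hp
      apply Finset.sum_eq_zero
      rintro ⟨⟨q11,q12⟩,⟨q21,q22⟩⟩ -
      simp only [mB, WB, Prod.mk.injEq]
      split_ifs with h1 h2 h3 <;> try ring
      exfalso; apply hp
      obtain ⟨h1a, h1b⟩ := h1
      obtain ⟨-, h2b, -⟩ := h2
      obtain ⟨-, h3b, -⟩ := h3
      simp only [Prod.mk.injEq]
      exact ⟨⟨h2b.symm, h1a⟩, h3b.symm, by rw [h1b, ← h2b]⟩
  -- Evaluate hB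
  have eB : (∑ p : (G × G) × (G × G), ∑ q : (G × G) × (G × G),
      V p * WB k q * mB ω p.1 q.1 ((a,(1:G)),(a,(1:G))).1 * mB ω p.2 q.2 ((a,(1:G)),(a,(1:G))).2)
      = V ((a,1),(a,a⁻¹)) * WB k ((a,1),(a*a⁻¹,a)) *
        mB ω (a,1) (a,1) (a,1) * mB ω (a,a⁻¹) (a*a⁻¹,a) (a,1) := by
    rw [Fintype.sum_eq_single (((a,(1:G)),(a,a⁻¹)) : (G×G)×(G×G))]
    · rw [Fintype.sum_eq_single (((a,(1:G)),(a*a⁻¹,a)) : (G×G)×(G×G))]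
      rintro ⟨⟨q11,q12⟩,⟨q21,q22⟩⟩ hq
      simp only [mB, WB, Prod.mk.injEq]
      split_ifs with h1 h2 h3 <;> try ring
      exfalso; apply hq
      obtain ⟨h1a, h1b⟩ := h1
      obtain ⟨h2a, -, h2c⟩ := h2
      obtain ⟨h3a, -, -⟩ := h3
      simp only [Prod.mk.injEq]
      refine ⟨⟨by simpa using h2a, h1a⟩, h3a, ?_⟩
      rw [h1b, h2a, mul_one]
    · rintro ⟨⟨p11,p12⟩,⟨p21,p22⟩⟩ hp
      apply Finset.sum_eq_zero
      rintro ⟨⟨q11,q12⟩,⟨q21,q22⟩⟩ -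
      simp only [mB, WB, Prod.mk.injEq]
      split_ifs with h1 h2 h3 <;> try ring
      exfalso; apply hp
      obtain ⟨h1a, h1b⟩ := h1
      obtain ⟨h2a, h2b, h2c⟩ := h2
      obtain ⟨-, h3b, h3c⟩ := h3
      have e1 : p12 = 1 := by rw [h1a, mul_one] at h2c; exact h2c.symm
      have e2 : p22 = a⁻¹ := by
        have : p22 * q22 = 1 := h3c.symm
        rw [h1b, h2a, h2b.symm, e1, mul_one] at this
        exact eq_inv_of_mul_eq_one_left this
      simp only [Prod.mk.injEq]
      exact ⟨⟨h2b.symm, e1⟩, h3b.symm, e2⟩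
  rw [eA] at hA
  rw [eB] at hB
  simp only [mB, WB] at hA hB
  rw [if_pos (by simp), if_pos (by simp), if_pos (by constructor <;> group)] at hA
  rw [if_pos (by simp), if_pos (by simp), if_pos (by constructor <;> group)] at hB
  rw [n1] at hA hB
  simp only [one_mul, mul_one] at hA hB
  have hVne : V ((a,(1:G)),(a,a⁻¹)) ≠ 0 := fun h => by simp [h] at hB
  have h12 : ω (a*a⁻¹) a a⁻¹ = ω a a⁻¹ a :=
    Units.ext (mul_left_cancel₀ hVne (hA.trans hB.symm))
  have hc := hcoc (a*a⁻¹) a a⁻¹ a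
  rw [hnorm (a*a⁻¹) (a*a⁻¹) a (Or.inr (Or.inl (mul_inv_cancel a))),
      hnorm (a*a⁻¹) a (a⁻¹*a) (Or.inr (Or.inr (inv_mul_cancel a))),
      inv_mul_cancel_right, mul_one, mul_one] at hc
  rw [h12] at hc
  exact mul_right_cancel (hc.trans (one_mul _).symm)
end

section
/- Let G be a finite group and ω a normalized 3-cocycle on G. In H₁^ω(G*) with basis g # δ_a, any product of three basis elements in which the middle group element of one factor is trivial associates: for all elements X, Y, Z of H₁^ω(G*), if one of X, Y, Z has the form Σ_a c_a (1_G # δ_a), then (XY)Z = X(YZ). -/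
open Finset

set_option linter.unusedSectionVars false
set_option linter.unusedVariables false

section Aux

variable {G : Type*} [Group G] [Fintype G] [DecidableEq G] {k : Type*} [Field k]

lemma delta_sum_left (ω : G → G → G → kˣ) (p q : G × G) (f : G × G → k) :
    ∑ s : G × G, mA ω p q s * f s =
      if p.2 = q.1 * q.2 then (ω p.1 q.1 q.2 : k) * f (p.1 * q.1, q.2) else 0 := by
  by_cases hP : p.2 = q.1 * q.2
  · simp [mA, hP, ite_mul, Finset.sum_ite_eq']
  · simp [mA, hP]

lemma C_eq (ω : G → G → G → kˣ)
    (hcoc : ∀ a b c d : G,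
      ω a b c * ω a (b * c) d * ω b c d = ω (a * b) c d * ω a b (c * d))
    (p q u r : G × G) (hω : (ω p.1 q.1 u.1 : k) = 1) :
    (∑ s : G × G, mA ω p q s * mA ω s u r) =
      ∑ t : G × G, mA ω q u t * mA ω p t r := by
  have hu : ω p.1 q.1 u.1 = 1 := Units.ext (by rw [hω, Units.val_one])
  have hc := hcoc p.1 q.1 u.1 u.2
  rw [hu, one_mul] at hc
  rw [delta_sum_left, delta_sum_left]
  unfold mA
  by_cases h1 : p.2 = q.1 * q.2 <;> by_cases h2 : q.2 = u.1 * u.2 <;>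
    simp_all [mul_assoc]
  split_ifs with h3
  · have hck := congrArg (Units.val (α := k)) hc
    push_cast at hck
    linear_combination -hck
  · rfl

end Aux

section Main

variable {G : Type*} [Group G] [Fintype G] [DecidableEq G] {k : Type*} [Field k]

lemma sum_swap4 (f : (G×G) → (G×G) → (G×G) → (G×G) → k) :
    (∑ s : G×G, ∑ u : G×G, ∑ p : G×G, ∑ q : G×G, f s u p q)
      = ∑ p : G×G, ∑ q : G×G, ∑ u : G×G, ∑ s : G×G, f s u p q :=
  calc (∑ s : G×G, ∑ u : G×G, ∑ p : G×G, ∑ q : G×G, f s u p q)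
      = ∑ u : G×G, ∑ s : G×G, ∑ p : G×G, ∑ q : G×G, f s u p q := Finset.sum_comm
    _ = ∑ u : G×G, ∑ p : G×G, ∑ s : G×G, ∑ q : G×G, f s u p q :=
        Finset.sum_congr rfl fun u _ => Finset.sum_comm
    _ = ∑ u : G×G, ∑ p : G×G, ∑ q : G×G, ∑ s : G×G, f s u p q :=
        Finset.sum_congr rfl fun u _ => Finset.sum_congr rfl fun p _ => Finset.sum_comm
    _ = ∑ p : G×G, ∑ u : G×G, ∑ q : G×G, ∑ s : G×G, f s u p q := Finset.sum_comm
    _ = ∑ p : G×G, ∑ q : G×G, ∑ u : G×G, ∑ s : G×G, f s u p q :=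
        Finset.sum_congr rfl fun p _ => Finset.sum_comm

lemma sum_swap3 (f : (G×G) → (G×G) → (G×G) → k) :
    (∑ t : G×G, ∑ q : G×G, ∑ u : G×G, f t q u)
      = ∑ q : G×G, ∑ u : G×G, ∑ t : G×G, f t q u :=
  calc (∑ t : G×G, ∑ q : G×G, ∑ u : G×G, f t q u)
      = ∑ q : G×G, ∑ t : G×G, ∑ u : G×G, f t q u := Finset.sum_comm
    _ = ∑ q : G×G, ∑ u : G×G, ∑ t : G×G, f t q u :=
        Finset.sum_congr rfl fun q _ => Finset.sum_comm

lemma lhs_expand (ω : G → G → G → kˣ) (X Y Z : G × G → k) (r : G × G) :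
    mulA ω (mulA ω X Y) Z r
      = ∑ p : G×G, ∑ q : G×G, ∑ u : G×G,
          X p * Y q * Z u * ∑ s : G×G, mA ω p q s * mA ω s u r := by
  simp only [mulA, Finset.sum_mul]
  rw [sum_swap4 (fun s u p q => X p * Y q * mA ω p q s * Z u * mA ω s u r)]
  refine Finset.sum_congr rfl fun p _ => Finset.sum_congr rfl fun q _ =>
    Finset.sum_congr rfl fun u _ => ?_
  rw [Finset.mul_sum]
  exact Finset.sum_congr rfl fun s _ => by ring

lemma rhs_expand (ω : G → G → G → kˣ) (X Y Z : G × G → k) (r : G × G) :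
    mulA ω X (mulA ω Y Z) r
      = ∑ p : G×G, ∑ q : G×G, ∑ u : G×G,
          X p * Y q * Z u * ∑ t : G×G, mA ω q u t * mA ω p t r := by
  simp only [mulA, Finset.mul_sum, Finset.sum_mul]
  refine Finset.sum_congr rfl fun p _ => ?_
  rw [sum_swap3 (fun t q u => X p * (Y q * Z u * mA ω q u t) * mA ω p t r)]
  refine Finset.sum_congr rfl fun q _ => Finset.sum_congr rfl fun u _ => ?_
  exact Finset.sum_congr rfl fun t _ => by ring

lemma assoc_of (ω : G → G → G → kˣ)
    (hcoc : ∀ a b c d : G,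
      ω a b c * ω a (b * c) d * ω b c d = ω (a * b) c d * ω a b (c * d))
    (X Y Z : G × G → k)
    (H : ∀ p q u : G × G, X p * Y q * Z u = 0 ∨ (ω p.1 q.1 u.1 : k) = 1) :
    mulA ω (mulA ω X Y) Z = mulA ω X (mulA ω Y Z) := by
  funext r
  rw [lhs_expand, rhs_expand]
  refine Finset.sum_congr rfl fun p _ => Finset.sum_congr rfl fun q _ =>
    Finset.sum_congr rfl fun u _ => ?_
  rcases H p q u with h0 | h1
  · rw [h0, zero_mul, zero_mul]
  · rw [C_eq ω hcoc p q u r h1]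

end Main

/-- in `H₁^ω(G*)`, any triple product in which one of the factors
lies in the span of `{1_G # δ_a : a ∈ G}` associates. -/
theorem stmt_15 {G : Type*} [Group G] [Fintype G] [DecidableEq G] {k : Type*} [Field k]
    (ω : G → G → G → kˣ)
    (hcoc : ∀ a b c d : G,
      ω a b c * ω a (b * c) d * ω b c d = ω (a * b) c d * ω a b (c * d))
    (hnorm : ∀ a b c : G, a = 1 ∨ b = 1 ∨ c = 1 → ω a b c = 1)
    (X Y Z : G × G → k)
    (h : (∃ c : G → k, X = fun p => if p.1 = 1 then c p.2 else 0) ∨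
         (∃ c : G → k, Y = fun p => if p.1 = 1 then c p.2 else 0) ∨
         (∃ c : G → k, Z = fun p => if p.1 = 1 then c p.2 else 0)) :
    mulA ω (mulA ω X Y) Z = mulA ω X (mulA ω Y Z) := by
  apply assoc_of ω hcoc
  intro p q u
  rcases h with ⟨c, hX⟩ | ⟨c, hY⟩ | ⟨c, hZ⟩
  · by_cases hp : p.1 = 1
    · exact Or.inr (by rw [hnorm p.1 q.1 u.1 (Or.inl hp), Units.val_one])
    · exact Or.inl (by rw [hX]; simp [hp])
  · by_cases hq : q.1 = 1
    · exact Or.inr (by rw [hnorm p.1 q.1 u.1 (Or.inr (Or.inl hq)), Units.val_one])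
    · exact Or.inl (by rw [hY]; simp [hq])
  · by_cases hu : u.1 = 1
    · exact Or.inr (by rw [hnorm p.1 q.1 u.1 (Or.inr (Or.inr hu)), Units.val_one])
    · exact Or.inl (by rw [hZ]; simp [hu])
end

section
/- Let G be a group and ω a normalized 3-cocycle on G with values in kˣ. Then for all a,b,c ∈ G the identity [ω(ab⁻¹,b,a⁻¹)ω(ac⁻¹,c,a⁻¹)ω(bc⁻¹,ca⁻¹,ab⁻¹)ω(c,a⁻¹,ab⁻¹)] / [ω(a,b⁻¹,b)ω(a,a⁻¹,ab⁻¹)ω(a,c⁻¹,c)ω(a,a⁻¹,ac⁻¹)ω(ba⁻¹,ac⁻¹,ca⁻¹)ω(ba⁻¹,ab⁻¹,bc⁻¹)] = [ω(bc⁻¹,c,b⁻¹)ω(ab⁻¹,b,a⁻¹)] / [ω(b,c⁻¹,c)ω(b,b⁻¹,bc⁻¹)ω(a,b⁻¹,b)ω(a,a⁻¹,ab⁻¹)ω(a⁻¹,ab⁻¹,bc⁻¹)] holds. -/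
/-- the scalar coefficient identity underlying the quasi-pentagon
equation `Ŵ₁₂Ŵ₁₃Ŵ₂₃ = Ŵ₂₃Ŵ₁₂Φ̄_S` for the twisted Heisenberg double `H₁^ω(G)`. -/
theorem stmt_17 {G : Type*} [Group G] {k : Type*} [Field k] (ω : G → G → G → kˣ)
    (hcoc : ∀ a b c d : G,
      ω a b c * ω a (b * c) d * ω b c d = ω (a * b) c d * ω a b (c * d))
    (hnorm : ∀ a b c : G, a = 1 ∨ b = 1 ∨ c = 1 → ω a b c = 1) :
    ∀ a b c : G,
      (ω (a * b⁻¹) b a⁻¹ * ω (a * c⁻¹) c a⁻¹ * ω (b * c⁻¹) (c * a⁻¹) (a * b⁻¹)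
          * ω c a⁻¹ (a * b⁻¹)) /
        (ω a b⁻¹ b * ω a a⁻¹ (a * b⁻¹) * ω a c⁻¹ c * ω a a⁻¹ (a * c⁻¹)
          * ω (b * a⁻¹) (a * c⁻¹) (c * a⁻¹) * ω (b * a⁻¹) (a * b⁻¹) (b * c⁻¹))
      = (ω (b * c⁻¹) c b⁻¹ * ω (a * b⁻¹) b a⁻¹) /
        (ω b c⁻¹ c * ω b b⁻¹ (b * c⁻¹) * ω a b⁻¹ b * ω a a⁻¹ (a * b⁻¹)
          * ω a⁻¹ (a * b⁻¹) (b * c⁻¹)) := by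
  intro a b c
  have hn1 : ∀ x y : G, ω 1 x y = 1 := fun x y => hnorm 1 x y (Or.inl rfl)
  have hn2 : ∀ x y : G, ω x 1 y = 1 := fun x y => hnorm x 1 y (Or.inr (Or.inl rfl))
  have hn3 : ∀ x y : G, ω x y 1 = 1 := fun x y => hnorm x y 1 (Or.inr (Or.inr rfl))
  have H1 : ω a⁻¹ a a⁻¹ * ω a a⁻¹ (a * b⁻¹) = ω a⁻¹ a b⁻¹ := by
    simpa only [mul_assoc, mul_inv_cancel, inv_mul_cancel, mul_inv_cancel_left, inv_mul_cancel_left, inv_inv, one_mul, mul_one, hn1, hn2, hn3] using hcoc a⁻¹ a a⁻¹ (a * b⁻¹)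
  have H2 : ω a⁻¹ a a⁻¹ * ω a a⁻¹ (a * c⁻¹) = ω a⁻¹ a c⁻¹ := by
    simpa only [mul_assoc, mul_inv_cancel, inv_mul_cancel, mul_inv_cancel_left, inv_mul_cancel_left, inv_inv, one_mul, mul_one, hn1, hn2, hn3] using hcoc a⁻¹ a a⁻¹ (a * c⁻¹)
  have H3 : ω a⁻¹ a b⁻¹ * ω a⁻¹ (a * b⁻¹) (b * c⁻¹) * ω a b⁻¹ (b * c⁻¹) = ω a⁻¹ a c⁻¹ := by
    simpa only [mul_assoc, mul_inv_cancel, inv_mul_cancel, mul_inv_cancel_left, inv_mul_cancel_left, inv_inv, one_mul, mul_one, hn1, hn2, hn3] using hcoc a⁻¹ a b⁻¹ (b * c⁻¹)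
  have H4 : ω (a * b⁻¹) (b * a⁻¹) (a * b⁻¹) * ω (b * a⁻¹) (a * b⁻¹) (b * c⁻¹) = ω (a * b⁻¹) (b * a⁻¹) (a * c⁻¹) := by
    simpa only [mul_assoc, mul_inv_cancel, inv_mul_cancel, mul_inv_cancel_left, inv_mul_cancel_left, inv_inv, one_mul, mul_one, hn1, hn2, hn3] using hcoc (a * b⁻¹) (b * a⁻¹) (a * b⁻¹) (b * c⁻¹)
  have H5 : ω (a * b⁻¹) (b * a⁻¹) (a * c⁻¹) * ω (a * b⁻¹) (b * c⁻¹) (c * a⁻¹) * ω (b * a⁻¹) (a * c⁻¹) (c * a⁻¹) = 1 := by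
    simpa only [mul_assoc, mul_inv_cancel, inv_mul_cancel, mul_inv_cancel_left, inv_mul_cancel_left, inv_inv, one_mul, mul_one, hn1, hn2, hn3] using hcoc (a * b⁻¹) (b * a⁻¹) (a * c⁻¹) (c * a⁻¹)
  have H6 : ω (a * b⁻¹) (b * c⁻¹) (c * a⁻¹) * ω (a * b⁻¹) (b * a⁻¹) (a * b⁻¹) * ω (b * c⁻¹) (c * a⁻¹) (a * b⁻¹) = ω (a * c⁻¹) (c * a⁻¹) (a * b⁻¹) * ω (a * b⁻¹) (b * c⁻¹) (c * b⁻¹) := by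
    simpa only [mul_assoc, mul_inv_cancel, inv_mul_cancel, mul_inv_cancel_left, inv_mul_cancel_left, inv_inv, one_mul, mul_one, hn1, hn2, hn3] using hcoc (a * b⁻¹) (b * c⁻¹) (c * a⁻¹) (a * b⁻¹)
  have H7 : ω (a * b⁻¹) (b * c⁻¹) c * ω (a * b⁻¹) b b⁻¹ * ω (b * c⁻¹) c b⁻¹ = ω (a * c⁻¹) c b⁻¹ * ω (a * b⁻¹) (b * c⁻¹) (c * b⁻¹) := by
    simpa only [mul_assoc, mul_inv_cancel, inv_mul_cancel, mul_inv_cancel_left, inv_mul_cancel_left, inv_inv, one_mul, mul_one, hn1, hn2, hn3] using hcoc (a * b⁻¹) (b * c⁻¹) c b⁻¹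
  have H8 : ω (a * b⁻¹) b b⁻¹ * ω b b⁻¹ (b * c⁻¹) = ω a b⁻¹ (b * c⁻¹) * ω (a * b⁻¹) b c⁻¹ := by
    simpa only [mul_assoc, mul_inv_cancel, inv_mul_cancel, mul_inv_cancel_left, inv_mul_cancel_left, inv_inv, one_mul, mul_one, hn1, hn2, hn3] using hcoc (a * b⁻¹) b b⁻¹ (b * c⁻¹)
  have H9 : ω (a * b⁻¹) b c⁻¹ * ω (a * b⁻¹) (b * c⁻¹) c * ω b c⁻¹ c = ω a c⁻¹ c := by
    simpa only [mul_assoc, mul_inv_cancel, inv_mul_cancel, mul_inv_cancel_left, inv_mul_cancel_left, inv_inv, one_mul, mul_one, hn1, hn2, hn3] using hcoc (a * b⁻¹) b c⁻¹ c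
  have H10 : ω (a * c⁻¹) c a⁻¹ * ω (a * c⁻¹) (c * a⁻¹) (a * b⁻¹) * ω c a⁻¹ (a * b⁻¹) = ω a a⁻¹ (a * b⁻¹) * ω (a * c⁻¹) c b⁻¹ := by
    simpa only [mul_assoc, mul_inv_cancel, inv_mul_cancel, mul_inv_cancel_left, inv_mul_cancel_left, inv_inv, one_mul, mul_one, hn1, hn2, hn3] using hcoc (a * c⁻¹) c a⁻¹ (a * b⁻¹)
  have hPQ := congrArg₂ HMul.hMul (congrArg₂ HMul.hMul (congrArg₂ HMul.hMul (congrArg₂ HMul.hMul (congrArg₂ HMul.hMul (congrArg₂ HMul.hMul (congrArg₂ HMul.hMul (congrArg₂ HMul.hMul (congrArg₂ HMul.hMul (H1) (H2.symm)) (H3)) (H4.symm)) (H5.symm)) (H6)) (H7.symm)) (H8)) (H9)) (H10)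
  rw [div_eq_div_iff_mul_eq_mul]
  refine mul_right_cancel (b := ω a⁻¹ a b⁻¹ * (ω a⁻¹ a a⁻¹ * ω a a⁻¹ (a * c⁻¹)) * ω a⁻¹ a c⁻¹ * (ω (a * b⁻¹) (b * a⁻¹) (a * b⁻¹) * ω (b * a⁻¹) (a * b⁻¹) (b * c⁻¹)) * (ω (a * b⁻¹) (b * a⁻¹) (a * c⁻¹) * ω (a * b⁻¹) (b * c⁻¹) (c * a⁻¹) * ω (b * a⁻¹) (a * c⁻¹) (c * a⁻¹)) * (ω (a * c⁻¹) (c * a⁻¹) (a * b⁻¹) * ω (a * b⁻¹) (b * c⁻¹) (c * b⁻¹)) * (ω (a * b⁻¹) (b * c⁻¹) c * ω (a * b⁻¹) b b⁻¹ * ω (b * c⁻¹) c b⁻¹) * (ω a b⁻¹ (b * c⁻¹) * ω (a * b⁻¹) b c⁻¹) * ω a c⁻¹ c * (ω a a⁻¹ (a * b⁻¹) * ω (a * c⁻¹) c b⁻¹)) ?_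
  conv_rhs => rw [← hPQ]
  rw [← Units.val_inj]
  push_cast
  ring
end

section
/- Let G be a finite group and ω a normalized 3-cocycle. In the twisted Heisenberg double H₁^ω(G*), the canonical element W = Σ_g (1 # δ_g) ⊗ (g # 1) and its quasi-inverse W̃ = Σ_{a,b} ω(b⁻¹a,a⁻¹,b)⁻¹ (1 # δ_a) ⊗ (a⁻¹ # δ_b) satisfy the quasi-Hopf equation W̃₂₃ W̃₁₃ W̃₁₂ = Φ_S^{321} W̃₁₂ W̃₂₃, where Φ_S^{321} = Σ_{a,b,c} ω(c⁻¹,b⁻¹,a⁻¹)⁻¹ (1#δ_a) ⊗ (1#δ_b) ⊗ (1#δ_c). -/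
open Finset

/-- The quasi-inverse `W̃ = Σ_{a,b} ω(b⁻¹a,a⁻¹,b)⁻¹ (1 # δ_a) ⊗ (a⁻¹ # δ_b)`. -/
def WtA {G : Type*} [Group G] [DecidableEq G] (k : Type*) [Field k]
    (ω : G → G → G → kˣ) : (G × G) × (G × G) → k :=
  fun pq => if pq.1.1 = 1 ∧ pq.2.1 = pq.1.2⁻¹ then
      (((ω (pq.2.2⁻¹ * pq.1.2) pq.1.2⁻¹ pq.2.2)⁻¹ : kˣ) : k)
    else 0

/-! Every factor is supported on basis tensors whose group parts are determined by their
`δ`-parts, so in each product of the two sides only one pair of basis tensors contributes,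
and normalization of `ω` discards the factors contributed by the unit legs. Both sides then
live on the tensors `(1 # δ_a) ⊗ (a⁻¹ # δ_b) ⊗ (b⁻¹ # δ_c)`, and their coefficients agree by
the cocycle identity at `(c⁻¹b, b⁻¹a, a⁻¹, c)`. -/

section Multiplication

variable {G : Type*} [Group G] [DecidableEq G] {k : Type*} [Field k] (ω : G → G → G → kˣ)

theorem mA_eq_ite (g a h b : G) (r : G × G) :
    mA ω (g, a) (h, b) r = if h = g⁻¹ * r.1 then if b = r.2 then if a = g⁻¹ * r.1 * r.2 then
      (ω g (g⁻¹ * r.1) r.2 : k) else 0 else 0 else 0 := by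
  obtain ⟨s, c⟩ := r
  simp only [mA, Prod.mk.injEq]
  by_cases hh : h = g⁻¹ * s
  · subst hh
    by_cases hb : b = c
    · subst hb; simp [mul_assoc]
    · simp [hb, Ne.symm hb]
  · have : s ≠ g * h := fun hs => hh (by simp [hs])
    simp [hh, this]

variable [Fintype G]

/-- `s # δ_c` arises only as `(g # δ_{g⁻¹sc}) · (g⁻¹s # δ_c)`, one summand for each `g`. -/
theorem mulA3_apply (x y : (G × G) × (G × G) × (G × G) → k)
    (r : (G × G) × (G × G) × (G × G)) :
    mulA3 ω x y r = ∑ g : G × G × G,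
      x ((g.1, g.1⁻¹ * r.1.1 * r.1.2), (g.2.1, g.2.1⁻¹ * r.2.1.1 * r.2.1.2),
          (g.2.2, g.2.2⁻¹ * r.2.2.1 * r.2.2.2)) *
        y ((g.1⁻¹ * r.1.1, r.1.2), (g.2.1⁻¹ * r.2.1.1, r.2.1.2), (g.2.2⁻¹ * r.2.2.1, r.2.2.2)) *
        (ω g.1 (g.1⁻¹ * r.1.1) r.1.2 * ω g.2.1 (g.2.1⁻¹ * r.2.1.1) r.2.1.2 *
          ω g.2.2 (g.2.2⁻¹ * r.2.2.1) r.2.2.2) := by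
  simp only [mulA3, Fintype.sum_prod_type, mA_eq_ite, mul_ite, ite_mul, mul_zero, zero_mul,
    Finset.sum_ite_irrel, Finset.sum_const_zero, Finset.sum_ite_eq', Finset.mem_univ, if_true]
  simp only [mul_assoc]

end Multiplication

section QuasiHopf

variable {G : Type*} [Group G] [DecidableEq G]

def WtA₁₂ (k : Type*) [Field k] (ω : G → G → G → kˣ) : (G × G) × (G × G) × (G × G) → k :=
  fun pqr => WtA k ω (pqr.1, pqr.2.1) * unitA k pqr.2.2

def WtA₁₃ (k : Type*) [Field k] (ω : G → G → G → kˣ) : (G × G) × (G × G) × (G × G) → k :=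
  fun pqr => WtA k ω (pqr.1, pqr.2.2) * unitA k pqr.2.1

def WtA₂₃ (k : Type*) [Field k] (ω : G → G → G → kˣ) : (G × G) × (G × G) × (G × G) → k :=
  fun pqr => unitA k pqr.1 * WtA k ω (pqr.2.1, pqr.2.2)

def PhiA₃₂₁ (k : Type*) [Field k] (ω : G → G → G → kˣ) : (G × G) × (G × G) × (G × G) → k :=
  fun pqr => if pqr.1.1 = 1 ∧ pqr.2.1.1 = 1 ∧ pqr.2.2.1 = 1 then
    (((ω pqr.2.2.2⁻¹ pqr.2.1.2⁻¹ pqr.1.2⁻¹)⁻¹ : kˣ) : k) else 0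

variable [Fintype G] {k : Type*} [Field k] {ω : G → G → G → kˣ}

theorem WtA₂₃_mul_WtA₁₃_apply (hnorm : ∀ a b c : G, a = 1 ∨ b = 1 ∨ c = 1 → ω a b c = 1)
    (g₁ a₁ g₂ a₂ g₃ a₃ : G) :
    mulA3 ω (WtA₂₃ k ω) (WtA₁₃ k ω) ((g₁, a₁), (g₂, a₂), (g₃, a₃)) =
      if g₁ = 1 ∧ g₂ = 1 ∧ g₃ = a₂⁻¹ * a₁⁻¹ then
        (((ω (a₃⁻¹ * a₁ * a₂) a₂⁻¹ (a₁⁻¹ * a₃))⁻¹ * (ω (a₃⁻¹ * a₁) a₁⁻¹ a₃)⁻¹ *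
          ω a₂⁻¹ a₁⁻¹ a₃ : kˣ) : k)
      else 0 := by
  rw [mulA3_apply, Fintype.sum_eq_single (1, 1, (g₂ * a₂)⁻¹)]
  · by_cases h : g₁ = 1 ∧ g₂ = 1 ∧ g₃ = a₂⁻¹ * a₁⁻¹
    · obtain ⟨rfl, rfl, rfl⟩ := h
      simp [WtA₂₃, WtA₁₃, unitA, WtA, hnorm, mul_assoc]
    · rw [if_neg h]
      simp only [WtA₂₃, unitA, ↓reduceIte, WtA, mul_inv_rev, inv_one, one_mul, and_self,
        inv_inv, Units.val_inv_eq_inv_val, WtA₁₃, mul_ite, mul_one, mul_zero, ite_mul,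
        zero_mul, ite_eq_right_iff, mul_eq_zero, inv_eq_zero, Units.ne_zero, or_self,
        imp_false, not_and]
      rintro rfl rfl hg₃
      exact h ⟨rfl, rfl, by rw [← hg₃, one_mul, inv_mul_cancel_left]⟩
  · rintro ⟨h₁, h₂, h₃⟩ hne
    have : ¬(h₁ = 1 ∧ h₂ = 1 ∧ h₃ = (h₂⁻¹ * g₂ * a₂)⁻¹) := by
      rintro ⟨rfl, rfl, rfl⟩
      simp at hne
    simp only [WtA₂₃, unitA, WtA]
    split_ifs <;> simp_all

theorem WtA₂₃_mul_WtA₁₃_mul_WtA₁₂_apply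
    (hnorm : ∀ a b c : G, a = 1 ∨ b = 1 ∨ c = 1 → ω a b c = 1) (g₁ a₁ g₂ a₂ g₃ a₃ : G) :
    mulA3 ω (mulA3 ω (WtA₂₃ k ω) (WtA₁₃ k ω)) (WtA₁₂ k ω) ((g₁, a₁), (g₂, a₂), (g₃, a₃)) =
      if g₁ = 1 ∧ g₂ = a₁⁻¹ ∧ g₃ = a₂⁻¹ then
        (((ω (a₃⁻¹ * a₂) (a₂⁻¹ * a₁) (a₁⁻¹ * a₃))⁻¹ * (ω (a₃⁻¹ * a₁) a₁⁻¹ a₃)⁻¹ *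
          ω (a₂⁻¹ * a₁) a₁⁻¹ a₃ * (ω (a₂⁻¹ * a₁) a₁⁻¹ a₂)⁻¹ : kˣ) : k)
      else 0 := by
  rw [mulA3_apply, Fintype.sum_eq_single (1, 1, (g₂ * a₂)⁻¹ * (g₁ * a₁)⁻¹)]
  · by_cases h : g₁ = 1 ∧ g₂ = a₁⁻¹ ∧ g₃ = a₂⁻¹
    · obtain ⟨rfl, rfl, rfl⟩ := h
      simp [WtA₂₃_mul_WtA₁₃_apply hnorm, WtA₁₂, unitA, WtA, hnorm, mul_assoc]
    · rw [if_neg h]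
      simp only [inv_one, one_mul, mul_inv_rev, inv_inv, WtA₂₃_mul_WtA₁₃_apply hnorm,
        and_self, ↓reduceIte, Units.val_mul, Units.val_inv_eq_inv_val, WtA₁₂, WtA, unitA,
        mul_ite, mul_one, mul_zero, ite_mul, zero_mul, ite_eq_right_iff, mul_eq_zero,
        inv_eq_zero, Units.ne_zero, or_self, imp_false, not_and]
      rintro hg₃ rfl rfl
      rw [one_mul, mul_inv_cancel_left] at hg₃
      exact h ⟨rfl, rfl, eq_inv_of_mul_eq_one_right hg₃⟩
  · rintro ⟨h₁, h₂, h₃⟩ hne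
    dsimp only
    rw [WtA₂₃_mul_WtA₁₃_apply hnorm, if_neg, zero_mul, zero_mul]
    rintro ⟨rfl, rfl, rfl⟩
    simp at hne

theorem PhiA₃₂₁_mul_WtA₁₂_apply
    (hnorm : ∀ a b c : G, a = 1 ∨ b = 1 ∨ c = 1 → ω a b c = 1) (g₁ a₁ g₂ a₂ g₃ a₃ : G) :
    mulA3 ω (PhiA₃₂₁ k ω) (WtA₁₂ k ω) ((g₁, a₁), (g₂, a₂), (g₃, a₃)) =
      if g₁ = 1 ∧ g₂ = a₁⁻¹ ∧ g₃ = 1 then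
        (((ω a₃⁻¹ (a₂⁻¹ * a₁) a₁⁻¹)⁻¹ * (ω (a₂⁻¹ * a₁) a₁⁻¹ a₂)⁻¹ : kˣ) : k)
      else 0 := by
  rw [mulA3_apply, Fintype.sum_eq_single (1, 1, 1)]
  · by_cases h : g₁ = 1 ∧ g₂ = a₁⁻¹ ∧ g₃ = 1
    · obtain ⟨rfl, rfl, rfl⟩ := h
      simp [PhiA₃₂₁, WtA₁₂, unitA, WtA, hnorm]
    · rw [if_neg h]
      simp only [PhiA₃₂₁, and_self, ↓reduceIte, inv_one, one_mul, mul_inv_rev,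
        Units.val_inv_eq_inv_val, WtA₁₂, WtA, unitA, mul_ite, mul_one, mul_zero, ite_mul,
        zero_mul, ite_eq_right_iff, mul_eq_zero, inv_eq_zero, Units.ne_zero, or_self,
        imp_false, not_and]
      exact fun h₃ h₁ h₂ => h ⟨h₁, h₂, h₃⟩
  · rintro ⟨h₁, h₂, h₃⟩ hne
    dsimp only
    rw [PhiA₃₂₁, if_neg, zero_mul, zero_mul]
    rintro ⟨rfl, rfl, rfl⟩
    simp at hne

theorem PhiA₃₂₁_mul_WtA₁₂_mul_WtA₂₃_apply
    (hnorm : ∀ a b c : G, a = 1 ∨ b = 1 ∨ c = 1 → ω a b c = 1) (g₁ a₁ g₂ a₂ g₃ a₃ : G) :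
    mulA3 ω (mulA3 ω (PhiA₃₂₁ k ω) (WtA₁₂ k ω)) (WtA₂₃ k ω) ((g₁, a₁), (g₂, a₂), (g₃, a₃)) =
      if g₁ = 1 ∧ g₂ = a₁⁻¹ ∧ g₃ = a₂⁻¹ then
        (((ω (a₃⁻¹ * a₂) (a₂⁻¹ * a₁) a₁⁻¹)⁻¹ * (ω (a₂⁻¹ * a₁) a₁⁻¹ a₂)⁻¹ *
          (ω (a₃⁻¹ * a₂) a₂⁻¹ a₃)⁻¹ : kˣ) : k)
      else 0 := by
  rw [mulA3_apply, Fintype.sum_eq_single (1, (g₁ * a₁)⁻¹, 1)]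
  · by_cases h : g₁ = 1 ∧ g₂ = a₁⁻¹ ∧ g₃ = a₂⁻¹
    · obtain ⟨rfl, rfl, rfl⟩ := h
      simp [PhiA₃₂₁_mul_WtA₁₂_apply hnorm, WtA₂₃, unitA, WtA, hnorm, mul_assoc]
    · rw [if_neg h]
      simp only [inv_one, one_mul, mul_inv_rev, inv_inv, PhiA₃₂₁_mul_WtA₁₂_apply hnorm,
        and_self, ↓reduceIte, Units.val_mul, Units.val_inv_eq_inv_val, WtA₂₃, unitA, WtA,
        mul_ite, ite_mul, zero_mul, mul_zero, ite_eq_right_iff, mul_eq_zero, inv_eq_zero,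
        Units.ne_zero, or_self, imp_false, and_imp]
      rintro hg₂ rfl rfl
      rw [one_mul] at hg₂
      exact h ⟨rfl, eq_inv_of_mul_eq_one_right hg₂, rfl⟩
  · rintro ⟨h₁, h₂, h₃⟩ hne
    dsimp only
    rw [PhiA₃₂₁_mul_WtA₁₂_apply hnorm, if_neg, zero_mul, zero_mul]
    rintro ⟨rfl, rfl, rfl⟩
    simp at hne

end QuasiHopf

theorem quasiHopf_coeff_eq_of_cocycle {G M : Type*} [Group G] [CommGroup M] {ω : G → G → G → M}
    (hcoc : ∀ a b c d : G,
      ω a b c * ω a (b * c) d * ω b c d = ω (a * b) c d * ω a b (c * d)) (a b c : G) :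
    (ω (c⁻¹ * b) (b⁻¹ * a) (a⁻¹ * c))⁻¹ * (ω (c⁻¹ * a) a⁻¹ c)⁻¹ * ω (b⁻¹ * a) a⁻¹ c *
        (ω (b⁻¹ * a) a⁻¹ b)⁻¹ =
      (ω (c⁻¹ * b) (b⁻¹ * a) a⁻¹)⁻¹ * (ω (b⁻¹ * a) a⁻¹ b)⁻¹ * (ω (c⁻¹ * b) b⁻¹ c)⁻¹ := by
  have key := hcoc (c⁻¹ * b) (b⁻¹ * a) a⁻¹ c
  simp only [mul_assoc, mul_inv_cancel_left, mul_inv_cancel, mul_one] at key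
  apply Additive.ofMul.injective
  have key' := congrArg Additive.ofMul key
  simp only [ofMul_mul, ofMul_inv] at key' ⊢
  rw [← sub_eq_zero] at key' ⊢
  rw [← key']
  abel

/-- the quasi-Hopf equation `W̃₂₃ W̃₁₃ W̃₁₂ = Φ_S^{321} W̃₁₂ W̃₂₃`
in `H₁^ω(G*)^{⊗3}`. -/
theorem stmt_19 {G : Type*} [Group G] [Fintype G] [DecidableEq G] {k : Type*} [Field k]
    (ω : G → G → G → kˣ)
    (hcoc : ∀ a b c d : G,
      ω a b c * ω a (b * c) d * ω b c d = ω (a * b) c d * ω a b (c * d))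
    (hnorm : ∀ a b c : G, a = 1 ∨ b = 1 ∨ c = 1 → ω a b c = 1) :
    mulA3 ω
      (mulA3 ω
        (fun pqr => unitA k pqr.1 * WtA k ω (pqr.2.1, pqr.2.2))    -- W̃₂₃
        (fun pqr => WtA k ω (pqr.1, pqr.2.2) * unitA k pqr.2.1))   -- W̃₁₃
      (fun pqr => WtA k ω (pqr.1, pqr.2.1) * unitA k pqr.2.2)      -- W̃₁₂
    = mulA3 ω
        (mulA3 ω
          (fun pqr =>                                              -- Φ_S^{321}
            if pqr.1.1 = 1 ∧ pqr.2.1.1 = 1 ∧ pqr.2.2.1 = 1 then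
              (((ω pqr.2.2.2⁻¹ pqr.2.1.2⁻¹ pqr.1.2⁻¹)⁻¹ : kˣ) : k)
            else 0)
          (fun pqr => WtA k ω (pqr.1, pqr.2.1) * unitA k pqr.2.2)) -- W̃₁₂
        (fun pqr => unitA k pqr.1 * WtA k ω (pqr.2.1, pqr.2.2)) := by  -- W̃₂₃
  change mulA3 ω (mulA3 ω (WtA₂₃ k ω) (WtA₁₃ k ω)) (WtA₁₂ k ω) =
    mulA3 ω (mulA3 ω (PhiA₃₂₁ k ω) (WtA₁₂ k ω)) (WtA₂₃ k ω)
  funext ⟨⟨g₁, a₁⟩, ⟨g₂, a₂⟩, ⟨g₃, a₃⟩⟩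
  rw [WtA₂₃_mul_WtA₁₃_mul_WtA₁₂_apply hnorm, PhiA₃₂₁_mul_WtA₁₂_mul_WtA₂₃_apply hnorm,
    quasiHopf_coeff_eq_of_cocycle hcoc]
end
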